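/- arXiv:2501.13565 — 4 statements merged into one kernel-verified Lean document; each statement's English description precedes it below -/
import Mathlib

section
/- Let g, p : ℝ → ℝ be continuously differentiable and 1-periodic (g(x+1) = g(x) and p(x+1) = p(x) for all x), with p(x) > 0 for all x. Then ∫₀¹ (g·p)′(x)·log(p(x)) dx = ∫₀¹ g′(x)·p(x) dx. -/
/-! Integrate by parts twice over one period, where boundary terms cancel: first with `g p` and
`log p`, which turns the left side into `-∫ g p · p'/p = -∫ g p'`, then with `g` and `p`, which
gives `∫ g' p = -∫ g p'`. -/

open Function Real

theorem Function.Periodic.integral_deriv_mul_eq_neg_integral_mul_deriv {u v : ℝ → ℝ} {T : ℝ}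
    (hu : ContDiff ℝ 1 u) (hv : ContDiff ℝ 1 v) (hu_per : Periodic u T) (hv_per : Periodic v T)
    (a : ℝ) :
    ∫ x in a..a + T, deriv u x * v x = -∫ x in a..a + T, u x * deriv v x := by
  have hud : Differentiable ℝ u := hu.differentiable one_ne_zero
  have hvd : Differentiable ℝ v := hv.differentiable one_ne_zero
  have hibp := intervalIntegral.integral_mul_deriv_eq_deriv_mul (a := a) (b := a + T)
    (fun x _ => (hud x).hasDerivAt) (fun x _ => (hvd x).hasDerivAt)
    ((hu.continuous_deriv le_rfl).intervalIntegrable _ _)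
    ((hv.continuous_deriv le_rfl).intervalIntegrable _ _)
  rw [hu_per a, hv_per a, sub_self, zero_sub] at hibp
  linarith

/-- Integration-by-parts identity (4.12): for `g, p ∈ C¹(𝕋)` with `p > 0`,
`∫₀¹ (gp)'(x) log(p(x)) dx = ∫₀¹ g'(x) p(x) dx`. -/
theorem periodic_ibp_log
    (g p : ℝ → ℝ)
    (hg : ContDiff ℝ 1 g) (hp : ContDiff ℝ 1 p)
    (hgper : ∀ x, g (x + 1) = g x) (hpper : ∀ x, p (x + 1) = p x)
    (hppos : ∀ x, 0 < p x) :
    ∫ x in (0:ℝ)..1, deriv (fun y => g y * p y) x * Real.log (p x)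
      = ∫ x in (0:ℝ)..1, deriv g x * p x := by
  have hp_ne (x : ℝ) : p x ≠ 0 := (hppos x).ne'
  have hgp_log := Periodic.integral_deriv_mul_eq_neg_integral_mul_deriv (hg.mul hp)
    (hp.log hp_ne) (Periodic.mul hgper hpper) (Periodic.comp hpper Real.log) 0
  have hg_p := Periodic.integral_deriv_mul_eq_neg_integral_mul_deriv hg hp hgper hpper 0
  rw [zero_add] at hgp_log hg_p
  rw [hgp_log, hg_p]
  congr 1
  refine intervalIntegral.integral_congr fun x _ => ?_
  rw [deriv.log ((hp.differentiable one_ne_zero) x) (hp_ne x), mul_assoc,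
    mul_div_cancel₀ _ (hp_ne x)]
end

section
/- Let b, p : ℝ → ℝ be twice continuously differentiable and 1-periodic (b(x+1) = b(x) and p(x+1) = p(x) for all x), with p(x) > 0 for all x. Then (1/2)·∫₀¹ (b²·p)″(x)·log(p(x)) dx = (1/2)·∫₀¹ [ b′(x)²·p(x) − ((b·p)′(x))² / p(x) ] dx. -/
/-!
One integration by parts over a period, with no boundary terms by periodicity, turns
`∫ (b²p)'' log p` into `-∫ (b²p)' p'/p`; expanding `(b²p)' = 2bb'p + b²p'` and
`(bp)' = b'p + bp'` shows that the two integrands agree pointwise.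
-/

open intervalIntegral

theorem Function.Periodic.deriv {f : ℝ → ℝ} {c : ℝ} (hf : Function.Periodic f c) :
    Function.Periodic (deriv f) c := fun x => by
  rw [← deriv_comp_add_const, hf.funext]

theorem integral_deriv_mul_eq_neg_integral_mul_deriv_of_periodic {u v : ℝ → ℝ} {T : ℝ}
    (hu : ContDiff ℝ 1 u) (hv : ContDiff ℝ 1 v)
    (hu_per : Function.Periodic u T) (hv_per : Function.Periodic v T) (a : ℝ) :
    ∫ x in a..a + T, deriv u x * v x = -∫ x in a..a + T, u x * deriv v x := by
  have ibp := integral_mul_deriv_eq_deriv_mul (a := a) (b := a + T)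
    (fun x _ => (hu.differentiable one_ne_zero x).hasDerivAt)
    (fun x _ => (hv.differentiable one_ne_zero x).hasDerivAt)
    ((hu.continuous_deriv le_rfl).intervalIntegrable _ _)
    ((hv.continuous_deriv le_rfl).intervalIntegrable _ _)
  rw [ibp, hu_per, hv_per]
  ring

theorem deriv_sq_mul {b p : ℝ → ℝ} {x : ℝ} (hb : DifferentiableAt ℝ b x)
    (hp : DifferentiableAt ℝ p x) :
    deriv (fun y => b y ^ 2 * p y) x = 2 * b x * deriv b x * p x + b x ^ 2 * deriv p x := by
  rw [((hb.hasDerivAt.fun_pow 2).fun_mul hp.hasDerivAt).deriv]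
  ring

/-- Identity (4.13) in the proof of the Lyapunov exponent formula: for `b, p ∈ C²(𝕋)`
with `p > 0`,
`(1/2) ∫₀¹ (b²p)''(x) log(p(x)) dx = (1/2) ∫₀¹ [ b'(x)² p(x) − ((bp)'(x))²/p(x) ] dx`. -/
theorem periodic_second_ibp_log
    (b p : ℝ → ℝ)
    (hb : ContDiff ℝ 2 b) (hp : ContDiff ℝ 2 p)
    (hbper : ∀ x, b (x + 1) = b x) (hpper : ∀ x, p (x + 1) = p x)
    (hppos : ∀ x, 0 < p x) :
    (1/2) * ∫ x in (0:ℝ)..1, deriv (deriv (fun y => (b y) ^ 2 * p y)) x * Real.log (p x)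
      = (1/2) * ∫ x in (0:ℝ)..1,
          ((deriv b x) ^ 2 * p x - (deriv (fun y => b y * p y) x) ^ 2 / p x) := by
  have hpne : ∀ x, p x ≠ 0 := fun x => (hppos x).ne'
  have hF : ContDiff ℝ (1 + 1) (fun y => b y ^ 2 * p y) := (hb.pow 2).mul hp
  have hlogp : ContDiff ℝ 1 (fun x => Real.log (p x)) := (hp.log hpne).of_le one_le_two
  have hFper : Function.Periodic (fun y => b y ^ 2 * p y) 1 := fun x => by
    simp only [hbper, hpper]
  have ibp := integral_deriv_mul_eq_neg_integral_mul_deriv_of_periodic hF.deriv' hlogp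
    hFper.deriv (fun x => by simp only [hpper]) 0
  rw [zero_add] at ibp
  rw [ibp, ← integral_neg]
  congr 1
  refine integral_congr fun x _ => ?_
  have hdb := hb.differentiable two_ne_zero x
  have hdp := hp.differentiable two_ne_zero x
  rw [deriv_sq_mul hdb hdp, deriv.log hdp (hpne x), deriv_fun_mul hdb hdp]
  field_simp
  ring
end

section
/- For every ε ∈ (0, 1/2), δ ∈ (0, 1/2) and M > 0 there exists L₀ > 0 with the following property: for every L ≥ L₀, every η ∈ ℝ, every continuous F : ℝ → ℝ with |F(x)| ≤ M for all x ∈ ℝ, and every differentiable γ : ℝ → ℝ satisfying γ′(t) = F(γ(t)) − L·sin(2π(γ(t) − η)) for all t ∈ [0,1] and η − 1/2 + δ ≤ γ(0) ≤ η + 1/2 − δ, one has |γ(1) − η| ≤ ε. -/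
/-!
On the band where the deviation `g = γ - η` satisfies `m ≤ g ≤ 1/2 - δ`, the control term
`L sin(2π g)` is at least `L sin(2π m)`, which beats the drift bound `M` by `1` once `L` is large.
So `g` falls faster than the line from `1/2 - δ` to `m` over unit time, and stays below it by
the fencing (comparison) theorem; the same argument applies to `η - γ`.
-/

open Set Real

theorem le_of_deriv_lt_of_mem_Icc {g : ℝ → ℝ} (hg : Differentiable ℝ g) {a b : ℝ}
    (hab : a ≤ b) (h0 : g 0 ≤ b)
    (hderiv : ∀ t ∈ Ico (0 : ℝ) 1, g t ∈ Icc a b → deriv g t < a - b) : g 1 ≤ a := by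
  have fence := image_le_of_deriv_right_lt_deriv_boundary (B := fun t => b + (a - b) * t)
    hg.continuous.continuousOn (fun t _ => (hg t).hasDerivAt.hasDerivWithinAt)
    (by simpa using h0) (fun t => by simpa using ((hasDerivAt_id t).const_mul (a - b)).const_add b)
    (fun t ht hgt => hderiv t ht ⟨by nlinarith [ht.2], by nlinarith [ht.1]⟩)
  simpa using fence (right_mem_Icc.2 zero_le_one)

theorem sin_two_pi_mul_le_sin_two_pi_mul {m x : ℝ} (hm : 0 ≤ m) (hmx : m ≤ x)
    (hxm : x ≤ 1 / 2 - m) : sin (2 * π * m) ≤ sin (2 * π * x) := by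
  have hπ := pi_pos
  rcases le_or_gt x (1 / 4) with hx | hx
  · exact sin_le_sin_of_le_of_le_pi_div_two (by nlinarith) (by nlinarith) (by nlinarith)
  · rw [← sin_pi_sub (2 * π * x)]
    exact sin_le_sin_of_le_of_le_pi_div_two (by nlinarith) (by nlinarith) (by nlinarith)

theorem le_of_deriv_eq_sub_mul_sin {g G : ℝ → ℝ} (hg : Differentiable ℝ g) {M L m b : ℝ}
    (hm : 0 ≤ m) (hmb : m ≤ b) (hb : b ≤ 1 / 2 - m) (hG : ∀ t, G t ≤ M) (hL : 0 ≤ L)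
    (hLM : M + 1 ≤ L * sin (2 * π * m))
    (hode : ∀ t ∈ Icc (0 : ℝ) 1, deriv g t = G t - L * sin (2 * π * g t))
    (h0 : g 0 ≤ b) : g 1 ≤ m := by
  refine le_of_deriv_lt_of_mem_Icc hg hmb h0 fun t ht hgt => ?_
  have hsin : L * sin (2 * π * m) ≤ L * sin (2 * π * g t) :=
    mul_le_mul_of_nonneg_left (sin_two_pi_mul_le_sin_two_pi_mul hm hgt.1 (hgt.2.trans hb)) hL
  rw [hode t (Ico_subset_Icc_self ht)]
  linarith [hG t]

/-- Analytic core of Lemma 4.5 (pointwise strong swift transitivity): for a strong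
enough control field `−L sin(2π(· − η))`, any solution of the controlled phase ODE
with bounded residual drift starting at distance at least `δ` from the repelling point
`η + 1/2` is squeezed to within `ε` of the attracting point `η` by time 1. -/
theorem squeezing_control
    : ∀ ε ∈ Set.Ioo (0:ℝ) (1/2), ∀ δ ∈ Set.Ioo (0:ℝ) (1/2), ∀ M : ℝ, 0 < M →
      ∃ L₀ : ℝ, 0 < L₀ ∧ ∀ L : ℝ, L₀ ≤ L → ∀ η : ℝ, ∀ F : ℝ → ℝ, Continuous F →
        (∀ x : ℝ, |F x| ≤ M) → ∀ γ : ℝ → ℝ, Differentiable ℝ γ →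
        (∀ t ∈ Set.Icc (0:ℝ) 1,
          deriv γ t = F (γ t) - L * Real.sin (2 * Real.pi * (γ t - η))) →
        η - 1/2 + δ ≤ γ 0 → γ 0 ≤ η + 1/2 - δ →
        |γ 1 - η| ≤ ε := by
  rintro ε ⟨hε0, -⟩ δ ⟨hδ0, hδ⟩ M hM
  set m := min (min ε δ) (1 / 2 - δ)
  have hmε : m ≤ ε := (min_le_left _ _).trans (min_le_left _ _)
  have hmδ : m ≤ δ := (min_le_left _ _).trans (min_le_right _ _)
  have hmb : m ≤ 1 / 2 - δ := min_le_right _ _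
  have hm0 : 0 < m := lt_min (lt_min hε0 hδ0) (by linarith)
  have hs : 0 < sin (2 * π * m) :=
    sin_pos_of_pos_of_lt_pi (by positivity) (by nlinarith [pi_pos])
  refine ⟨(M + 1) / sin (2 * π * m), by positivity, ?_⟩
  intro L hL η F _ hFM γ hγ hode h0l h0u
  have hLM : M + 1 ≤ L * sin (2 * π * m) := (div_le_iff₀ hs).1 hL
  have hL0 : 0 ≤ L := nonneg_of_mul_nonneg_left (by linarith) hs
  have above : γ 1 - η ≤ m :=
    le_of_deriv_eq_sub_mul_sin (hγ.sub_const η) hm0.le hmb (by linarith)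
      (fun t => (abs_le.1 (hFM (γ t))).2) hL0 hLM
      (fun t ht => by rw [deriv_sub_const, hode t ht]) (by linarith)
  have below : η - γ 1 ≤ m :=
    le_of_deriv_eq_sub_mul_sin (G := fun t => -F (γ t)) (hγ.const_sub η)
      hm0.le hmb (by linarith) (fun t => by linarith [(abs_le.1 (hFM (γ t))).1]) hL0 hLM
      (fun t ht => by rw [deriv_const_sub, hode t ht, ← neg_sub (γ t) η, mul_neg, sin_neg]; ring)
      (by linarith)
  exact abs_le.2 ⟨by linarith, by linarith⟩
end

section
/- Define k : ℝ → ℝ by k(t) = 1 for t ∈ [0,1) ∪ [2,3) ∪ [4,5] and k(t) = −1 for t ∈ [1,2) ∪ [3,4), and define η : ℝ → ℝ by η(t) = 0 for t ∈ [0,2), η(t) = 1/3 for t ∈ [2,4), and η(t) = −1/3 for t ∈ [4,5]. Then for every ε > 0 there exists L₀ > 0 such that for all L ≥ L₀ the following holds: whenever γ₁, γ₂, γ₃ : [0,5] → ℝ are continuous, differentiable on each open interval (n, n+1) for n ∈ {0,1,2,3,4} with γ_j′(t) = −k(t)·L·sin(2π(γ_j(t) − η(t))) there, and γ₁(0) =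 0, γ₂(0) = 1/3, γ₃(0) = −1/3, then: −ε ≤ γ₃(1) < γ₂(1) ≤ ε, and 1/3 − ε ≤ γ₁(3) < γ₃(3) + 1 ≤ 1/3 + ε, and −1/3 − ε ≤ γ₂(5) − 1 < γ₁(5) ≤ −1/3 + ε. -/
/-!
On each unit interval `[n, n+1]` the control is constant, so the equation is autonomous,
`x' = -σL sin(2π(x - c))`, and it integrates explicitly: `tan(π(x - c))` is multiplied by
`exp(-2πσL)`. With `σ = 1` the points `c ± 1/3` are squeezed to `c ± A`, where
`A = sineFlow L 1 (1/3) = arctan(√3 e^{-2πL})/π → 0` as `L → ∞`; with `σ = -1` on the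
next interval the squeeze is undone, while `c` itself never moves. Following the three
starting points through the five intervals gives their exact positions `±A`, `1/3 ∓ A`,
`-1/3 ± A` at times `1`, `3`, `5`, and the inequalities follow from `0 < A ≤ ε`.
-/

open Real Set Filter Topology

/-- The control sign `k(t)`: equal to `1` on `[0,1) ∪ [2,3) ∪ [4,5]` and `−1` on
`[1,2) ∪ [3,4)`. -/
noncomputable def controlSign (t : ℝ) : ℝ :=
  if t < 1 then 1 else if t < 2 then -1 else if t < 3 then 1 else if t < 4 then -1 else 1

/-- The target point `η(t)`: equal to `0` on `[0,2)`, `1/3` on `[2,4)`, `−1/3` on `[4,5]`. -/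
noncomputable def controlTarget (t : ℝ) : ℝ :=
  if t < 2 then 0 else if t < 4 then 1/3 else -1/3

theorem ODE_solution_right_endpoint_eq {E : Type*} [NormedAddCommGroup E] [NormedSpace ℝ E]
    {v : ℝ → E → E} {K : NNReal} (hv : ∀ t, LipschitzWith K (v t))
    {f g : ℝ → E} {a b : ℝ} (hab : a < b)
    (hf : ContinuousOn f (Icc a b)) (hf' : ∀ t ∈ Ioo a b, HasDerivAt f (v t (f t)) t)
    (hg : ContinuousOn g (Icc a b)) (hg' : ∀ t ∈ Ioo a b, HasDerivAt g (v t (g t)) t)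
    (ha : f a = g a) : f b = g b := by
  -- Gronwall from every interior starting time `s`, then let `s → a⁺`.
  have hbound : ∀ s ∈ Ioo a b, dist (f b) (g b) ≤ dist (f s) (g s) * exp (K * (b - a)) := by
    intro s hs
    have hsub : Icc s b ⊆ Icc a b := Icc_subset_Icc_left hs.1.le
    have hIco : ∀ t ∈ Ico s b, t ∈ Ioo a b := fun t ht => ⟨hs.1.trans_le ht.1, ht.2⟩
    calc dist (f b) (g b) ≤ dist (f s) (g s) * exp (K * (b - s)) :=
          dist_le_of_trajectories_ODE hv (hf.mono hsub)
            (fun t ht => (hf' t (hIco t ht)).hasDerivWithinAt) (hg.mono hsub)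
            (fun t ht => (hg' t (hIco t ht)).hasDerivWithinAt) le_rfl b ⟨hs.2.le, le_rfl⟩
      _ ≤ dist (f s) (g s) * exp (K * (b - a)) := by
          gcongr
          linarith [hs.1]
  have hlim : Tendsto (fun s => dist (f s) (g s) * exp (K * (b - a))) (𝓝[Ioo a b] a)
      (𝓝 (dist (f a) (g a) * exp (K * (b - a)))) := by
    have hIcc : 𝓝[Ioo a b] a ≤ 𝓝[Icc a b] a := nhdsWithin_mono a Ioo_subset_Icc_self
    have hmem : a ∈ Icc a b := left_mem_Icc.2 hab.le
    exact (((hf a hmem).mono_left hIcc).dist ((hg a hmem).mono_left hIcc)).mul_const _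
  have : (𝓝[Ioo a b] a).NeBot := left_nhdsWithin_Ioo_neBot hab
  have hle := ge_of_tendsto hlim (eventually_mem_nhdsWithin.mono hbound)
  rw [ha, dist_self, zero_mul] at hle
  exact dist_le_zero.1 hle

/-- The flow of the autonomous equation `x' = -L sin(2πx)` on `(-1/2, 1/2)`: along it,
`tan(πx)` is multiplied by `exp(-2πLt)`. -/
noncomputable def sineFlow (L t x : ℝ) : ℝ :=
  arctan (tan (π * x) * exp (-(2 * π * L * t))) / π

theorem hasDerivAt_sineFlow (L x t : ℝ) :
    HasDerivAt (fun s => sineFlow L s x) (-L * sin (2 * π * sineFlow L t x)) t := by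
  set w := tan (π * x) * exp (-(2 * π * L * t))
  have hw : HasDerivAt (fun s => tan (π * x) * exp (-(2 * π * L * s)))
      (w * -(2 * π * L)) t := by
    have hlin : HasDerivAt (fun s => -(2 * π * L * s)) (-(2 * π * L)) t := by
      simpa using (hasDerivAt_id t).const_mul (-(2 * π * L))
    exact (hlin.exp.const_mul (tan (π * x))).congr_deriv (mul_assoc _ _ _).symm
  have hsin : sin (2 * π * sineFlow L t x) = 2 * w / (1 + w ^ 2) := by
    have hsq : sqrt (1 + w ^ 2) * sqrt (1 + w ^ 2) = 1 + w ^ 2 :=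
      mul_self_sqrt (by positivity)
    have harg : 2 * π * sineFlow L t x = 2 * arctan w := by
      rw [sineFlow]; field_simp; rfl
    rw [harg, sin_two_mul,
      sin_arctan, cos_arctan, mul_assoc, div_mul_div_comm, mul_one, hsq]
    ring
  refine (((hasDerivAt_arctan w).comp t hw).div_const π).congr_deriv ?_
  rw [hsin]
  field_simp

theorem sineFlow_zero_time {L x : ℝ} (hx : |x| < 1 / 2) : sineFlow L 0 x = x := by
  obtain ⟨hx₁, hx₂⟩ := abs_lt.1 hx
  rw [sineFlow, mul_zero, neg_zero, exp_zero, mul_one,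
    arctan_tan (by nlinarith [pi_pos]) (by nlinarith [pi_pos]), mul_div_cancel_left₀ _ pi_ne_zero]

theorem sineFlow_zero (L t : ℝ) : sineFlow L t 0 = 0 := by
  simp [sineFlow]

theorem sineFlow_neg (L t x : ℝ) : sineFlow L t (-x) = -sineFlow L t x := by
  simp only [sineFlow, mul_neg, tan_neg, neg_mul, arctan_neg, neg_div]

theorem abs_sineFlow_lt (L t x : ℝ) : |sineFlow L t x| < 1 / 2 := by
  rw [sineFlow, abs_div, abs_of_pos pi_pos, div_lt_iff₀ pi_pos, abs_lt]
  constructor <;> linarith [neg_pi_div_two_lt_arctan (tan (π * x) * exp (-(2 * π * L * t))),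
    arctan_lt_pi_div_two (tan (π * x) * exp (-(2 * π * L * t)))]

theorem sineFlow_pos {L t x : ℝ} (hx₀ : 0 < x) (hx₁ : x < 1 / 2) : 0 < sineFlow L t x := by
  have htan : 0 < tan (π * x) :=
    tan_pos_of_pos_of_lt_pi_div_two (by positivity) (by nlinarith [pi_pos])
  exact div_pos (arctan_pos.2 (by positivity)) pi_pos

theorem sineFlow_neg_sineFlow {L t x : ℝ} (hx : |x| < 1 / 2) :
    sineFlow (-L) t (sineFlow L t x) = x := by
  have hexp : exp (-(2 * π * L * t)) * exp (-(2 * π * -L * t)) = 1 := by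
    rw [← exp_add]; ring_nf; exact exp_zero
  rw [sineFlow, sineFlow, mul_div_cancel₀ _ pi_ne_zero, tan_arctan, mul_assoc, hexp, mul_one]
  simpa [sineFlow] using sineFlow_zero_time (L := L) hx

theorem tendsto_sineFlow_atTop {t : ℝ} (ht : 0 < t) (x : ℝ) :
    Tendsto (fun L => sineFlow L t x) atTop (𝓝 0) := by
  have hexp : Tendsto (fun L => exp (-(2 * π * L * t))) atTop (𝓝 0) := by
    refine tendsto_exp_atBot.comp (tendsto_neg_atTop_atBot.comp ?_)
    exact (tendsto_id.const_mul_atTop (by positivity : 0 < 2 * π)).atTop_mul_const ht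
  have := hexp.const_mul (tan (π * x))
  rw [mul_zero] at this
  have := ((continuous_arctan.tendsto 0).comp this).div_const π
  simpa [sineFlow] using this

theorem eq_add_sineFlow_of_hasDerivAt {L c a b : ℝ} {γ : ℝ → ℝ} (hab : a < b)
    (hγ : ContinuousOn γ (Icc a b))
    (hγ' : ∀ t ∈ Ioo a b, HasDerivAt γ (-L * sin (2 * π * (γ t - c))) t)
    (ha : |γ a - c| < 1 / 2) :
    γ b = c + sineFlow L (b - a) (γ a - c) := by
  set u : ℝ → ℝ := fun s => c + sineFlow L (s - a) (γ a - c)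
  have hu : ∀ t, HasDerivAt u (-L * sin (2 * π * (u t - c))) t := fun t => by
    simpa [u] using ((hasDerivAt_sineFlow L (γ a - c) (t - a)).comp_sub_const t a).const_add c
  have hv : LipschitzWith _ (fun y : ℝ => -L * sin (2 * π * (y - c))) :=
    (lipschitzWith_smul (-L)).comp (lipschitzWith_sin.comp
      ((lipschitzWith_smul (2 * π)).comp (LipschitzWith.id.sub (LipschitzWith.const c))))
  refine ODE_solution_right_endpoint_eq (fun _ => hv) hab hγ hγ'
    (fun t _ => (hu t).continuousAt.continuousWithinAt) (fun t _ => hu t) ?_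
  simp [u, sineFlow_zero_time ha]

theorem controlSign_eq_and_controlTarget_eq_of_mem_Ioo {n : ℕ} (hn : n < 5) {t : ℝ}
    (ht : t ∈ Ioo (n : ℝ) (n + 1)) :
    controlSign t = controlSign n ∧ controlTarget t = controlTarget n := by
  obtain ⟨ht₁, ht₂⟩ := ht
  unfold controlSign controlTarget
  constructor <;> interval_cases n <;> norm_num at ht₁ ht₂ <;> split_ifs <;> norm_num at * <;>
    linarith

def IsControlledSolution (L : ℝ) (γ : ℝ → ℝ) : Prop :=
  ContinuousOn γ (Icc 0 5) ∧ ∀ n ∈ Finset.range 5, ∀ t ∈ Ioo (n : ℝ) ((n : ℝ) + 1),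
    HasDerivAt γ (-(controlSign t) * L * sin (2 * π * (γ t - controlTarget t))) t

namespace IsControlledSolution

variable {L : ℝ} {γ : ℝ → ℝ}

/-- The vector field is `1`-periodic in the state, so the target may be shifted by any
integer `m`. -/
theorem eq_add_sineFlow (hγ : IsControlledSolution L γ) {n : ℕ} (hn : n < 5) (m : ℤ) {x : ℝ}
    (hx : |x| < 1 / 2) (h : γ n = controlTarget n + m + x) :
    γ (n + 1) = controlTarget n + m + sineFlow (controlSign n * L) 1 x := by
  have hder : ∀ t ∈ Ioo (n : ℝ) (n + 1), HasDerivAt γ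
      (-(controlSign n * L) * sin (2 * π * (γ t - (controlTarget n + m)))) t := by
    intro t ht
    obtain ⟨hσ, hη⟩ := controlSign_eq_and_controlTarget_eq_of_mem_Ioo hn ht
    have hperiod : sin (2 * π * (γ t - (controlTarget n + m))) =
        sin (2 * π * (γ t - controlTarget n)) := by
      rw [← sin_sub_int_mul_two_pi (2 * π * (γ t - controlTarget n)) m]
      ring_nf
    refine (hγ.2 n (Finset.mem_range.2 hn) t ht).congr_deriv ?_
    rw [hperiod, hσ, hη]
    ring
  have := eq_add_sineFlow_of_hasDerivAt (lt_add_one (n : ℝ))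
    (hγ.1.mono (Icc_subset_Icc (Nat.cast_nonneg n) (by norm_cast))) hder
    (by rwa [h, add_sub_cancel_left])
  rwa [add_sub_cancel_left, h, add_sub_cancel_left] at this

end IsControlledSolution

namespace IsControlledSolution
variable {L : ℝ} {γ : ℝ → ℝ}

theorem apply_three_and_apply_five_of_apply_zero_eq_zero (hγ : IsControlledSolution L γ)
    (h0 : γ 0 = 0) :
    γ 3 = 1 / 3 - sineFlow L 1 (1 / 3) ∧ γ 5 = -(1 / 3) + sineFlow L 1 (1 / 3) := by
  have h1 := hγ.eq_add_sineFlow (n := 0) (by norm_num) 0 (x := 0) (by norm_num)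
    (by norm_num [controlTarget, h0])
  norm_num [controlTarget, controlSign, sineFlow_zero] at h1
  have h2 := hγ.eq_add_sineFlow (n := 1) (by norm_num) 0 (x := 0) (by norm_num)
    (by norm_num [controlTarget, h1])
  norm_num [controlTarget, controlSign, sineFlow_zero] at h2
  have h3 := hγ.eq_add_sineFlow (n := 2) (by norm_num) 0 (x := -(1 / 3))
    (by norm_num [abs_of_neg]) (by norm_num [controlTarget, h2])
  norm_num [controlTarget, controlSign, sineFlow_neg] at h3
  have h4 := hγ.eq_add_sineFlow (n := 3) (by norm_num) 0 (x := -sineFlow L 1 (1 / 3))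
    (by rw [abs_neg]; exact abs_sineFlow_lt _ _ _) (by norm_num [controlTarget, h3])
  norm_num [controlTarget, controlSign, sineFlow_neg,
    sineFlow_neg_sineFlow (by norm_num : |(1 / 3 : ℝ)| < 1 / 2)] at h4
  have h5 := hγ.eq_add_sineFlow (n := 4) (by norm_num) 0 (x := 1 / 3)
    (by norm_num) (by norm_num [controlTarget, h4])
  norm_num [controlTarget, controlSign] at h5
  exact ⟨by linarith, by linarith⟩

theorem apply_one_and_apply_five_of_apply_zero_eq_third (hγ : IsControlledSolution L γ)
    (h0 : γ 0 = 1 / 3) :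
    γ 1 = sineFlow L 1 (1 / 3) ∧ γ 5 = 2 / 3 - sineFlow L 1 (1 / 3) := by
  have h1 := hγ.eq_add_sineFlow (n := 0) (by norm_num) 0 (x := 1 / 3) (by norm_num)
    (by norm_num [controlTarget, h0])
  norm_num [controlTarget, controlSign] at h1
  have h2 := hγ.eq_add_sineFlow (n := 1) (by norm_num) 0 (x := sineFlow L 1 (1 / 3))
    (abs_sineFlow_lt _ _ _) (by norm_num [controlTarget, h1])
  norm_num [controlTarget, controlSign,
    sineFlow_neg_sineFlow (by norm_num : |(1 / 3 : ℝ)| < 1 / 2)] at h2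
  have h3 := hγ.eq_add_sineFlow (n := 2) (by norm_num) 0 (x := 0) (by norm_num)
    (by norm_num [controlTarget, h2])
  norm_num [controlTarget, controlSign, sineFlow_zero] at h3
  have h4 := hγ.eq_add_sineFlow (n := 3) (by norm_num) 0 (x := 0) (by norm_num)
    (by norm_num [controlTarget, h3])
  norm_num [controlTarget, controlSign, sineFlow_zero] at h4
  have h5 := hγ.eq_add_sineFlow (n := 4) (by norm_num) 1 (x := -(1 / 3))
    (by norm_num [abs_of_neg]) (by norm_num [controlTarget, h4])
  norm_num [controlTarget, controlSign, sineFlow_neg] at h5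
  exact ⟨h1, by linarith⟩

theorem apply_one_and_apply_three_of_apply_zero_eq_neg_third (hγ : IsControlledSolution L γ)
    (h0 : γ 0 = -(1 / 3)) :
    γ 1 = -sineFlow L 1 (1 / 3) ∧ γ 3 = -(2 / 3) + sineFlow L 1 (1 / 3) := by
  have h1 := hγ.eq_add_sineFlow (n := 0) (by norm_num) 0 (x := -(1 / 3))
    (by norm_num [abs_of_neg]) (by norm_num [controlTarget, h0])
  norm_num [controlTarget, controlSign, sineFlow_neg] at h1
  have h2 := hγ.eq_add_sineFlow (n := 1) (by norm_num) 0 (x := -sineFlow L 1 (1 / 3))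
    (by rw [abs_neg]; exact abs_sineFlow_lt _ _ _) (by norm_num [controlTarget, h1])
  norm_num [controlTarget, controlSign, sineFlow_neg,
    sineFlow_neg_sineFlow (by norm_num : |(1 / 3 : ℝ)| < 1 / 2)] at h2
  have h3 := hγ.eq_add_sineFlow (n := 2) (by norm_num) (-1) (x := 1 / 3)
    (by norm_num) (by norm_num [controlTarget, h2])
  norm_num [controlTarget, controlSign] at h3
  exact ⟨h1, by linarith⟩

end IsControlledSolution

/-- Lemma 4.6 (triple squeezing cycle) with the explicit piecewise control: for `L`
large enough, trajectories of `γ' = −k(t) L sin(2π(γ − η(t)))` started at `0`, `1/3`,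
`−1/3` are consecutively squeezed near `0` at time 1, near `1/3` at time 3, and near
`−1/3` at time 5, with orderings preserved. -/
theorem triple_squeezing_cycle :
    ∀ ε : ℝ, 0 < ε → ∃ L₀ : ℝ, 0 < L₀ ∧ ∀ L : ℝ, L₀ ≤ L →
      ∀ γ₁ γ₂ γ₃ : ℝ → ℝ,
      ContinuousOn γ₁ (Set.Icc 0 5) → ContinuousOn γ₂ (Set.Icc 0 5) →
      ContinuousOn γ₃ (Set.Icc 0 5) →
      (∀ n ∈ Finset.range 5, ∀ t ∈ Set.Ioo (n : ℝ) ((n : ℝ) + 1),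
        HasDerivAt γ₁ (-(controlSign t) * L *
          Real.sin (2 * Real.pi * (γ₁ t - controlTarget t))) t) →
      (∀ n ∈ Finset.range 5, ∀ t ∈ Set.Ioo (n : ℝ) ((n : ℝ) + 1),
        HasDerivAt γ₂ (-(controlSign t) * L *
          Real.sin (2 * Real.pi * (γ₂ t - controlTarget t))) t) →
      (∀ n ∈ Finset.range 5, ∀ t ∈ Set.Ioo (n : ℝ) ((n : ℝ) + 1),
        HasDerivAt γ₃ (-(controlSign t) * L *
          Real.sin (2 * Real.pi * (γ₃ t - controlTarget t))) t) →
      γ₁ 0 = 0 → γ₂ 0 = 1/3 → γ₃ 0 = -(1/3) →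
      ((-ε ≤ γ₃ 1 ∧ γ₃ 1 < γ₂ 1 ∧ γ₂ 1 ≤ ε) ∧
       (1/3 - ε ≤ γ₁ 3 ∧ γ₁ 3 < γ₃ 3 + 1 ∧ γ₃ 3 + 1 ≤ 1/3 + ε) ∧
       (-(1/3) - ε ≤ γ₂ 5 - 1 ∧ γ₂ 5 - 1 < γ₁ 5 ∧ γ₁ 5 ≤ -(1/3) + ε)) := by
  intro ε hε
  obtain ⟨L₀, hL₀⟩ := eventually_atTop.1
    ((tendsto_sineFlow_atTop one_pos (1 / 3)).eventually (ge_mem_nhds hε))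
  refine ⟨max L₀ 1, lt_max_of_lt_right one_pos,
    fun L hL γ₁ γ₂ γ₃ hc₁ hc₂ hc₃ hd₁ hd₂ hd₃ h₁ h₂ h₃ => ?_⟩
  have hAε : sineFlow L 1 (1 / 3) ≤ ε := hL₀ L (le_of_max_le_left hL)
  have hA : 0 < sineFlow L 1 (1 / 3) := sineFlow_pos (by norm_num) (by norm_num)
  obtain ⟨e₁₃, e₁₅⟩ :=
    IsControlledSolution.apply_three_and_apply_five_of_apply_zero_eq_zero ⟨hc₁, hd₁⟩ h₁
  obtain ⟨e₂₁, e₂₅⟩ :=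
    IsControlledSolution.apply_one_and_apply_five_of_apply_zero_eq_third ⟨hc₂, hd₂⟩ h₂
  obtain ⟨e₃₁, e₃₃⟩ := IsControlledSolution.apply_one_and_apply_three_of_apply_zero_eq_neg_third
    ⟨hc₃, hd₃⟩ h₃
  rw [e₁₃, e₁₅, e₂₁, e₂₅, e₃₁, e₃₃]
  refine ⟨⟨?_, ?_, ?_⟩, ⟨?_, ?_, ?_⟩, ⟨?_, ?_, ?_⟩⟩ <;> linarith
end
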